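/- arXiv:2409.09339 — 6 statements merged into one kernel-verified Lean document; each statement's English description precedes it below -/
import Mathlib

section
/- Let N ≥ 1 and let a, b ∈ ℂ^N (with the standard Hermitian inner product ⟨·,·⟩ and ℓ²-norm) be unit vectors. Define c : Fin N × Fin N → ℂ by c(i,j) = (a_i·b_j + b_i·a_j)/2. Then Σ_{i,j} |c(i,j)|² = 1/2 + (1/2)·|⟨a,b⟩|². Consequently, the swap test applied to the amplitude encodings of a and b outputs 0 with probability 1/2 + (1/2)|Σ_j conj(a_j) b_j|². -/
open Finset Complex

/-- The swap test applied to the amplitude encodings of unit vectors `a` and `b` outputs `0`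
with probability `1/2 + (1/2)|⟨a,b⟩|²`: the squared norm of the symmetrized vector
`((a⊗b)+(b⊗a))/2` equals `1/2 + (1/2)|Σ_j conj(a_j) b_j|²`. -/
theorem swap_test_probability (N : ℕ) (hN : 1 ≤ N) (a b : Fin N → ℂ)
    (ha : ∑ i, ‖a i‖ ^ 2 = 1) (hb : ∑ i, ‖b i‖ ^ 2 = 1) :
    ∑ i, ∑ j, ‖(a i * b j + b i * a j) / 2‖ ^ 2 =
      1 / 2 + 1 / 2 * ‖∑ j, (starRingEnd ℂ) (a j) * b j‖ ^ 2 := by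
  set s : ℂ := ∑ j, (starRingEnd ℂ) (a j) * b j with hs
  have habs : ∀ z : ℂ, ‖z‖ ^ 2 = (z * (starRingEnd ℂ) z).re := by
    intro z
    rw [Complex.mul_conj]
    simp [Complex.sq_norm]
  have hA : ∑ i, a i * (starRingEnd ℂ) (a i) = 1 := by
    have : ∑ i, a i * (starRingEnd ℂ) (a i) = ((∑ i, ‖a i‖ ^ 2 : ℝ) : ℂ) := by
      push_cast
      refine Finset.sum_congr rfl fun i _ => ?_
      rw [Complex.mul_conj]; norm_cast; rw [Complex.sq_norm]
    rw [this, ha]; norm_num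
  have hB : ∑ i, b i * (starRingEnd ℂ) (b i) = 1 := by
    have : ∑ i, b i * (starRingEnd ℂ) (b i) = ((∑ i, ‖b i‖ ^ 2 : ℝ) : ℂ) := by
      push_cast
      refine Finset.sum_congr rfl fun i _ => ?_
      rw [Complex.mul_conj]; norm_cast; rw [Complex.sq_norm]
    rw [this, hb]; norm_num
  have hconj : ∑ i, a i * (starRingEnd ℂ) (b i) = (starRingEnd ℂ) s := by
    rw [hs, map_sum]
    refine Finset.sum_congr rfl fun i _ => ?_
    simp [mul_comm]
  have hsalt : ∑ i, b i * (starRingEnd ℂ) (a i) = s := by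
    rw [hs]
    exact Finset.sum_congr rfl fun i _ => (mul_comm _ _)
  have expand : ∀ i j : Fin N,
      ((a i * b j + b i * a j) / 2) * (starRingEnd ℂ) ((a i * b j + b i * a j) / 2) =
        (a i * (starRingEnd ℂ) (a i)) * (b j * (starRingEnd ℂ) (b j)) / 4 +
        (a i * (starRingEnd ℂ) (b i)) * (b j * (starRingEnd ℂ) (a j)) / 4 +
        (b i * (starRingEnd ℂ) (a i)) * (a j * (starRingEnd ℂ) (b j)) / 4 +
        (b i * (starRingEnd ℂ) (b i)) * (a j * (starRingEnd ℂ) (a j)) / 4 := by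
    intro i j
    simp only [map_add, map_mul, map_div₀, map_ofNat]
    ring
  have hsum : ∑ i, ∑ j, ((a i * b j + b i * a j) / 2) *
      (starRingEnd ℂ) ((a i * b j + b i * a j) / 2) =
      (∑ i, a i * (starRingEnd ℂ) (a i)) * (∑ j, b j * (starRingEnd ℂ) (b j)) / 4 +
      (∑ i, a i * (starRingEnd ℂ) (b i)) * (∑ j, b j * (starRingEnd ℂ) (a j)) / 4 +
      (∑ i, b i * (starRingEnd ℂ) (a i)) * (∑ j, a j * (starRingEnd ℂ) (b j)) / 4 +
      (∑ i, b i * (starRingEnd ℂ) (b i)) * (∑ j, a j * (starRingEnd ℂ) (a j)) / 4 := by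
    simp_rw [expand, Finset.sum_add_distrib, ← Finset.sum_div, ← Finset.mul_sum,
      ← Finset.sum_mul]
  have lhs_eq : ∑ i, ∑ j, ‖(a i * b j + b i * a j) / 2‖ ^ 2 =
      (∑ i, ∑ j, ((a i * b j + b i * a j) / 2) *
        (starRingEnd ℂ) ((a i * b j + b i * a j) / 2)).re := by
    rw [Complex.re_sum]
    refine Finset.sum_congr rfl fun i _ => ?_
    rw [Complex.re_sum]
    exact Finset.sum_congr rfl fun j _ => habs _
  have hval : ((1:ℂ) * 1 / 4 + (starRingEnd ℂ) s * s / 4 + s * (starRingEnd ℂ) s / 4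
      + 1 * 1 / 4) = ((1/2 + 1/2 * Complex.normSq s : ℝ) : ℂ) := by
    rw [mul_comm ((starRingEnd ℂ) s) s, Complex.mul_conj]
    push_cast
    ring
  rw [lhs_eq, hsum, hA, hB, hconj, hsalt, hval, Complex.ofReal_re, habs s,
    Complex.mul_conj, Complex.ofReal_re]
end

section
/- Let M ≥ 1 be a natural number and δ ∈ ℝ with 0 < |δ| ≤ 1/(2M). Then sin²(Mπδ)/(M²·sin²(πδ)) ≥ 4/π². Consequently, if the eigenphase θ lies within 1/(2M) of a grid point y/M, the Quantum Phase Estimation measurement returns y with probability at least 4/π². -/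
/-- If the eigenphase lies within `1/(2M)` of a grid point, Quantum Phase Estimation
returns that grid point with probability at least `4/π²`:
for `0 < |δ| ≤ 1/(2M)`, `sin²(Mπδ)/(M² sin²(πδ)) ≥ 4/π²`. -/
theorem qpe_nearest_grid_point_probability (M : ℕ) (hM : 1 ≤ M) (δ : ℝ)
    (hδ0 : 0 < |δ|) (hδ1 : |δ| ≤ 1 / (2 * M)) :
    4 / Real.pi ^ 2 ≤
      Real.sin (M * Real.pi * δ) ^ 2 / (M ^ 2 * Real.sin (Real.pi * δ) ^ 2) := by
  have hpi := Real.pi_pos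
  have hMpos : (0:ℝ) < M := by exact_mod_cast hM
  set x := |δ| with hx
  have hx0 : 0 < x := hδ0
  -- reduce to |δ|
  have hs1 : Real.sin (M * Real.pi * δ) ^ 2 = Real.sin (M * Real.pi * x) ^ 2 := by
    rcases abs_choice δ with h | h
    · rw [hx, h]
    · rw [hx, h]; rw [mul_neg, Real.sin_neg, neg_sq]
  have hs2 : Real.sin (Real.pi * δ) ^ 2 = Real.sin (Real.pi * x) ^ 2 := by
    rcases abs_choice δ with h | h
    · rw [hx, h]
    · rw [hx, h]; rw [mul_neg, Real.sin_neg, neg_sq]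
  rw [hs1, hs2]
  have hxle : (M:ℝ) * x ≤ 1 / 2 := by
    rw [le_div_iff₀ (by positivity)] at hδ1
    nlinarith
  have hMx : (M:ℝ) * Real.pi * x ≤ Real.pi / 2 := by nlinarith
  have hMx0 : 0 ≤ (M:ℝ) * Real.pi * x := by positivity
  have hnum : 2 * (M:ℝ) * x ≤ Real.sin (M * Real.pi * x) := by
    have := Real.mul_le_sin hMx0 hMx
    calc 2 * (M:ℝ) * x = 2 / Real.pi * (M * Real.pi * x) := by
          field_simp
      _ ≤ _ := this
  have hnum2 : 4 * (M:ℝ)^2 * x^2 ≤ Real.sin (M * Real.pi * x) ^ 2 := by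
    have h0 : 0 ≤ 2 * (M:ℝ) * x := by positivity
    nlinarith
  have hsinpos : 0 < Real.sin (Real.pi * x) := by
    apply Real.sin_pos_of_pos_of_lt_pi (by positivity)
    have hM1 : (1:ℝ) ≤ M := by exact_mod_cast hM
    nlinarith [hxle, hM1, hx0, hpi]
  have hsinle : Real.sin (Real.pi * x) ≤ Real.pi * x :=
    le_of_lt (Real.sin_lt (by positivity))
  have hden : Real.sin (Real.pi * x) ^ 2 ≤ (Real.pi * x)^2 := by nlinarith
  have hden0 : 0 < (M:ℝ)^2 * Real.sin (Real.pi * x) ^ 2 := by positivity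
  have key : 4 / Real.pi ^ 2 = (4 * (M:ℝ)^2 * x^2) / ((M:ℝ)^2 * (Real.pi * x)^2) := by
    field_simp
  rw [key]
  apply div_le_div₀ (by positivity) hnum2 hden0
  nlinarith [hden]
end

section
/- Let M ≥ 2 be a natural number and d ∈ ℝ with 0 < d < 1/M. Then sin²(Mπd)/(M²·sin²(πd)) + sin²(Mπ(1/M − d))/(M²·sin²(π(1/M − d))) ≥ 8/π². Consequently, in Quantum Phase Estimation with an M-point grid on an eigenphase θ lying strictly between two consecutive grid points y/M and (y+1)/M, the probability of measuring one of the two nearest grid points is at least 8/π²; this is the source of the success probability 8/π² in the Quantum Amplitude Estimation theorem. -/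
set_option maxHeartbeats 1000000

open Real

private lemma qpe_aux_coreA (a : ℝ) (ha0 : 0 ≤ a) (ha : a ≤ 1/5) :
    8*(1-a)^2 ≤ 9.8696*(1 - 2.4675*a^2)^2 * (a^2 + (1-a)^2) := by
  nlinarith [sq_nonneg a, sq_nonneg (a*(1-a)), sq_nonneg (a*a), sq_nonneg (1/5-a),
    mul_nonneg (mul_nonneg ha0 ha0) ha0, sq_nonneg (a^2 - a), sq_nonneg (a^3)]

private lemma qpe_aux_coreB1 (t : ℝ) (ht0 : 0 ≤ t) (ht : t ≤ 3/10) :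
    2*(1.5707965*t - 0.6459636*t^3 + 0.317088*t^4)^2 ≤ 4.935*t^2 - 3*t^4 := by
  nlinarith [mul_nonneg ht0 ht0, mul_nonneg (mul_nonneg ht0 ht0) ht0,
    mul_nonneg (mul_nonneg (mul_nonneg ht0 ht0) ht0) ht0,
    mul_nonneg (mul_nonneg (mul_nonneg (mul_nonneg ht0 ht0) ht0) ht0) ht0,
    mul_nonneg (mul_nonneg (mul_nonneg (mul_nonneg (mul_nonneg ht0 ht0) ht0) ht0) ht0) ht0,
    sq_nonneg (t*t*(3/10 - t)),
    mul_nonneg (mul_nonneg (mul_nonneg ht0 ht0) ht0) (by linarith : (0:ℝ) ≤ 3/10 - t)]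

private lemma qpe_aux_coreB2 (t : ℝ) (ht0 : 0 ≤ t) (ht : t ≤ 3/10) :
    8*(1/4-t^2)^2 ≤ (1 - 4.935*t^2 + 3*t^4)^2 * (1/2+2*t^2) := by
  nlinarith [mul_nonneg ht0 ht0, mul_nonneg (mul_nonneg ht0 ht0) ht0,
    mul_nonneg (mul_nonneg (mul_nonneg ht0 ht0) ht0) ht0,
    mul_nonneg (mul_nonneg (mul_nonneg (mul_nonneg ht0 ht0) ht0) ht0) ht0,
    mul_nonneg (mul_nonneg (mul_nonneg (mul_nonneg (mul_nonneg ht0 ht0) ht0) ht0) ht0) ht0,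
    mul_nonneg (mul_nonneg (mul_nonneg (mul_nonneg (mul_nonneg (mul_nonneg ht0 ht0) ht0) ht0) ht0) ht0) ht0,
    sq_nonneg (t*t*(3/10 - t)), sq_nonneg (t*t*t*(3/10-t))]

private lemma qpe_aux_g_nonneg (t : ℝ) (ht0 : 0 ≤ t) (ht : t ≤ 3/10) :
    (0:ℝ) ≤ 1 - 4.935*t^2 + 3*t^4 := by
  nlinarith [sq_nonneg (t*t), mul_nonneg ht0 ht0]

/-- key inequality on the half interval -/
private lemma qpe_key_half (a : ℝ) (ha0 : 0 < a) (ha : a ≤ 1/2) :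
    8*a^2*(1-a)^2 ≤ Real.sin (Real.pi*a)^2 * (a^2 + (1-a)^2) := by
  have hπ1 : 3.141592 < π := pi_gt_d6
  have hπ2 : π < 3.141593 := pi_lt_d6
  by_cases hc : a ≤ 1/5
  · -- region A : use sin x > x - x^3/4
    have hpa0 : 0 < π * a := by positivity
    have hpa1 : π * a ≤ 1 := by nlinarith
    have hs : π*a - (π*a)^3/4 < Real.sin (π*a) := by
      have := Real.sin_gt_sub_cube hpa0; nlinarith [pow_pos hpa0 3]
    have hL0 : 0 ≤ π*a - (π*a)^3/4 := by nlinarith [sq_nonneg (π*a)]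
    have hs2 : (π*a - (π*a)^3/4)^2 ≤ Real.sin (π*a)^2 := pow_le_pow_left₀ hL0 hs.le 2
    have e1 : (9.8696:ℝ) ≤ π^2 := by nlinarith
    have e2 : (1:ℝ) - 2.4675*a^2 ≤ 1 - (π*a)^2/4 := by
      have hπsq : π^2 ≤ 9.87 := by nlinarith
      nlinarith [mul_le_mul_of_nonneg_right hπsq (sq_nonneg a)]
    have e3 : (0:ℝ) ≤ 1 - 2.4675*a^2 := by nlinarith
    have core : 8*(1-a)^2 ≤ π^2*(1 - (π*a)^2/4)^2 * (a^2 + (1-a)^2) := by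
      calc 8*(1-a)^2 ≤ 9.8696*(1 - 2.4675*a^2)^2 * (a^2 + (1-a)^2) :=
            qpe_aux_coreA a ha0.le hc
        _ ≤ π^2*(1 - (π*a)^2/4)^2 * (a^2 + (1-a)^2) := by
            have h4 : (1 - 2.4675*a^2)^2 ≤ (1 - (π*a)^2/4)^2 := pow_le_pow_left₀ e3 e2 2
            have hsum : (0:ℝ) ≤ a^2 + (1-a)^2 := by positivity
            nlinarith [mul_le_mul e1 h4 (by positivity) (by positivity), sq_nonneg (1 - (π*a)^2/4)]
    have step : a^2 * (8*(1-a)^2) ≤ a^2 * (π^2*(1 - (π*a)^2/4)^2 * (a^2 + (1-a)^2)) :=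
      mul_le_mul_of_nonneg_left core (sq_nonneg a)
    have hEq : a^2 * (π^2*(1 - (π*a)^2/4)^2 * (a^2 + (1-a)^2))
        = (π*a - (π*a)^3/4)^2 * (a^2 + (1-a)^2) := by ring
    have hsum : (0:ℝ) ≤ a^2 + (1-a)^2 := by positivity
    calc 8*a^2*(1-a)^2 = a^2 * (8*(1-a)^2) := by ring
      _ ≤ (π*a - (π*a)^3/4)^2 * (a^2 + (1-a)^2) := by rw [← hEq]; exact step
      _ ≤ Real.sin (π*a)^2 * (a^2 + (1-a)^2) := mul_le_mul_of_nonneg_right hs2 hsum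
  · -- region B : a ∈ (1/5, 1/2], work with t = 1/2 - a
    push_neg at hc
    obtain ⟨t, htdef⟩ : ∃ t : ℝ, t = 1/2 - a := ⟨_, rfl⟩
    have ht0 : 0 ≤ t := by simp only [htdef]; linarith
    have ht : t ≤ 3/10 := by simp only [htdef]; linarith
    have hsin : Real.sin (π*a) = Real.cos (π*t) := by
      rw [show π*a = π/2 - π*t by simp only [htdef]; ring]
      exact Real.sin_pi_div_two_sub _
    have hcos : Real.cos (π*t) = 1 - 2 * Real.sin (π*t/2)^2 := by
      rw [show π*t = 2*(π*t/2) by ring, Real.cos_two_mul', Real.cos_sq']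
      ring
    obtain ⟨s, hsdef⟩ : ∃ s : ℝ, s = Real.sin (π*t/2) := ⟨_, rfl⟩
    rw [show (2:ℝ) * Real.sin (π*t/2)^2 = 2*s^2 by rw [hsdef]] at hcos
    have hw0 : 0 ≤ π*t/2 := by positivity
    have hw1 : π*t/2 ≤ 1 := by nlinarith
    have hs0 : 0 ≤ s := hsdef ▸ Real.sin_nonneg_of_nonneg_of_le_pi hw0 (by nlinarith)
    have hsU : s ≤ π*t/2 - (π*t/2)^3/6 + (π*t/2)^4 * (5/96) := by
      have hb := Real.sin_bound (x := π*t/2) (by rw [abs_of_nonneg hw0]; exact hw1)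
      rw [abs_of_nonneg hw0] at hb
      have h2 := (abs_le.mp hb).2
      have h5 : (π*t/2)^5 ≤ (π*t/2)^4 := by
        have := mul_le_mul_of_nonneg_left hw1 (pow_nonneg hw0 4)
        rw [pow_succ]; linarith
      have h4p : 0 ≤ (π*t/2)^4 := pow_nonneg hw0 4
      rw [hsdef]; linarith
    have hw_le : π*t/2 ≤ 1.5707965*t := by
      have := mul_le_mul_of_nonneg_right hπ2.le ht0; linarith
    have hw_ge : 1.570796*t ≤ π*t/2 := by
      have := mul_le_mul_of_nonneg_right hπ1.le ht0; linarith
    have h3 : (1.570796*t)^3 ≤ (π*t/2)^3 := pow_le_pow_left₀ (by positivity) hw_ge 3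
    have h4 : (π*t/2)^4 ≤ (1.5707965*t)^4 := pow_le_pow_left₀ hw0 hw_le 4
    have hsV : s ≤ 1.5707965*t - 0.6459636*t^3 + 0.317088*t^4 := by
      have ht3 : 0 ≤ t^3 := by positivity
      have ht4 : 0 ≤ t^4 := by positivity
      ring_nf at h3 h4
      linarith
    have hV0 : 0 ≤ 1.5707965*t - 0.6459636*t^3 + 0.317088*t^4 := hs0.trans hsV
    have hs2 : 2*s^2 ≤ 4.935*t^2 - 3*t^4 := by
      have := pow_le_pow_left₀ hs0 hsV 2
      nlinarith [qpe_aux_coreB1 t ht0 ht]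
    have hcosge : 1 - 4.935*t^2 + 3*t^4 ≤ Real.cos (π*t) := by rw [hcos]; linarith
    have hg0 := qpe_aux_g_nonneg t ht0 ht
    have hc2 : (1 - 4.935*t^2 + 3*t^4)^2 ≤ Real.cos (π*t)^2 := pow_le_pow_left₀ hg0 hcosge 2
    have hsum : (0:ℝ) ≤ 1/2 + 2*t^2 := by positivity
    have final : 8*(1/4-t^2)^2 ≤ Real.cos (π*t)^2 * (1/2+2*t^2) :=
      le_trans (qpe_aux_coreB2 t ht0 ht) (mul_le_mul_of_nonneg_right hc2 hsum)
    rw [hsin]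
    calc 8*a^2*(1-a)^2 = 8*(1/4-t^2)^2 := by simp only [htdef]; ring
      _ ≤ Real.cos (π*t)^2 * (1/2+2*t^2) := final
      _ = Real.cos (π*t)^2 * (a^2 + (1-a)^2) := by simp only [htdef]; ring

/-- key inequality on the full interval -/
private lemma qpe_key (a : ℝ) (ha0 : 0 < a) (ha1 : a < 1) :
    8*a^2*(1-a)^2 ≤ Real.sin (Real.pi*a)^2 * (a^2 + (1-a)^2) := by
  rcases le_or_gt a (1/2) with h | h
  · exact qpe_key_half a ha0 h
  · have hb := qpe_key_half (1-a) (by linarith) (by linarith)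
    rw [show π*(1-a) = π - π*a by ring, Real.sin_pi_sub] at hb
    nlinarith [hb]

/-- In Quantum Phase Estimation with an `M`-point grid on an eigenphase lying strictly
between two consecutive grid points (at distances `d` and `1/M - d` from them), the
probability of measuring one of the two nearest grid points is at least `8/π²`. -/
theorem qpe_two_nearest_grid_points_probability (M : ℕ) (hM : 2 ≤ M) (d : ℝ)
    (hd0 : 0 < d) (hd1 : d < 1 / M) :
    8 / Real.pi ^ 2 ≤
      Real.sin (M * Real.pi * d) ^ 2 / (M ^ 2 * Real.sin (Real.pi * d) ^ 2) +
      Real.sin (M * Real.pi * (1 / M - d)) ^ 2 /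
        (M ^ 2 * Real.sin (Real.pi * (1 / M - d)) ^ 2) := by
  have hπ := Real.pi_pos
  have hπ2 : π < 3.141593 := pi_lt_d6
  have hM2 : (2:ℝ) ≤ (M:ℝ) := by exact_mod_cast hM
  have hM0 : (0:ℝ) < M := by linarith
  set a : ℝ := (M:ℝ) * d with ha
  have ha0 : 0 < a := mul_pos hM0 hd0
  have ha1 : a < 1 := by
    rw [lt_div_iff₀ hM0] at hd1
    rw [ha]; nlinarith
  have hd2 : d < 1 := by
    have : (1:ℝ)/M ≤ 1/2 := by
      apply div_le_div_of_nonneg_left (by norm_num) (by norm_num) hM2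
    linarith
  have hd0' : 0 < 1/(M:ℝ) - d := by
    rw [lt_div_iff₀ hM0] at hd1; rw [sub_pos, lt_div_iff₀ hM0]; linarith
  have hd2' : 1/(M:ℝ) - d < 1 := by
    have : (1:ℝ)/M ≤ 1/2 := by
      apply div_le_div_of_nonneg_left (by norm_num) (by norm_num) hM2
    linarith
  have hMd' : (M:ℝ) * (1/M - d) = 1 - a := by
    rw [ha]; field_simp
  rw [show (M:ℝ) * π * d = π * a by rw [ha]; ring,
      show (M:ℝ) * π * (1/(M:ℝ) - d) = π - π * a by
        rw [show (M:ℝ) * π * (1/(M:ℝ) - d) = π * ((M:ℝ) * (1/(M:ℝ) - d)) by ring, hMd']; ring,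
      Real.sin_pi_sub]
  have hsd : 0 < Real.sin (π*d) :=
    Real.sin_pos_of_pos_of_lt_pi (by positivity) (by nlinarith)
  have hsd' : 0 < Real.sin (π*(1/(M:ℝ) - d)) :=
    Real.sin_pos_of_pos_of_lt_pi (by positivity) (by nlinarith)
  have h1a : (0:ℝ) < 1 - a := by linarith
  have hb1 : (M:ℝ)^2 * Real.sin (π*d)^2 ≤ π^2*a^2 := by
    have h := pow_le_pow_left₀ hsd.le (Real.sin_le (by positivity)) 2
    calc (M:ℝ)^2 * Real.sin (π*d)^2 ≤ (M:ℝ)^2 * (π*d)^2 :=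
          mul_le_mul_of_nonneg_left h (by positivity)
      _ = π^2*a^2 := by rw [ha]; ring
  have hb2 : (M:ℝ)^2 * Real.sin (π*(1/(M:ℝ) - d))^2 ≤ π^2*(1-a)^2 := by
    have h := pow_le_pow_left₀ hsd'.le (Real.sin_le (by positivity)) 2
    calc (M:ℝ)^2 * Real.sin (π*(1/(M:ℝ)-d))^2 ≤ (M:ℝ)^2 * (π*(1/(M:ℝ)-d))^2 :=
          mul_le_mul_of_nonneg_left h (by positivity)
      _ = π^2*((M:ℝ)*(1/(M:ℝ)-d))^2 := by ring
      _ = π^2*(1-a)^2 := by rw [hMd']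
  have hden1 : (0:ℝ) < (M:ℝ)^2 * Real.sin (π*d)^2 :=
    mul_pos (pow_pos hM0 2) (pow_pos hsd 2)
  have hden2 : (0:ℝ) < (M:ℝ)^2 * Real.sin (π*(1/(M:ℝ) - d))^2 :=
    mul_pos (pow_pos hM0 2) (pow_pos hsd' 2)
  have t1 : Real.sin (π*a)^2 / (π^2*a^2) ≤
      Real.sin (π*a)^2 / ((M:ℝ)^2 * Real.sin (π*d)^2) :=
    div_le_div_of_nonneg_left (sq_nonneg _) hden1 hb1
  have t2 : Real.sin (π*a)^2 / (π^2*(1-a)^2) ≤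
      Real.sin (π*a)^2 / ((M:ℝ)^2 * Real.sin (π*(1/(M:ℝ) - d))^2) :=
    div_le_div_of_nonneg_left (sq_nonneg _) hden2 hb2
  have hkey := qpe_key a ha0 ha1
  have hp1 : (0:ℝ) < π^2*a^2 := by positivity
  have hp2 : (0:ℝ) < π^2*(1-a)^2 := mul_pos (by positivity) (pow_pos h1a 2)
  have main : 8/π^2 ≤ Real.sin (π*a)^2/(π^2*a^2) + Real.sin (π*a)^2/(π^2*(1-a)^2) := by
    rw [div_add_div _ _ hp1.ne' hp2.ne', div_le_div_iff₀ (by positivity) (mul_pos hp1 hp2)]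
    nlinarith [mul_le_mul_of_nonneg_left hkey
      (by positivity : (0:ℝ) ≤ π^4), sq_nonneg π]
  linarith [main, t1, t2]
end

section
/- Let θ, θ̃ ∈ ℝ and ε ≥ 0 with |θ̃ − θ| ≤ ε, and set a = sin²(πθ) and ã = sin²(πθ̃). Then |ã − a| ≤ 2πε·√(a(1−a)) + π²ε². In particular, taking ε = 2^{−m}, the trigonometric post-processing of the Quantum Amplitude Estimation output converts an m-bit estimate of the eigenphase into an estimate μ̂ of the amplitude μ = sin²(πθ) withation error at most 2π·2^{−m}√(μ(1−μ)) + π²·2^{−2m}. -/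
/-- Trigonometric post-processing of Quantum Amplitude Estimation: if `|θ̃ - θ| ≤ ε`,
then the amplitudes `a = sin²(πθ)` and `ã = sin²(πθ̃)` satisfy
`|ã - a| ≤ 2πε √(a(1-a)) + π²ε²`. -/
theorem qae_trigonometric_postprocessing (θ θ' ε : ℝ) (hε : 0 ≤ ε)
    (hθ : |θ' - θ| ≤ ε) (a a' : ℝ)
    (ha : a = Real.sin (Real.pi * θ) ^ 2) (ha' : a' = Real.sin (Real.pi * θ') ^ 2) :
    |a' - a| ≤ 2 * Real.pi * ε * Real.sqrt (a * (1 - a)) + Real.pi ^ 2 * ε ^ 2 := by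
  set x := Real.pi * θ with hx
  set y := Real.pi * θ' with hy
  have hπ := Real.pi_pos
  -- identity: a' - a = sin(y+x) * sin(y-x)
  have hid : a' - a = Real.sin (y + x) * Real.sin (y - x) := by
    rw [ha, ha', Real.sin_add, Real.sin_sub]
    have h1 := Real.sin_sq_add_cos_sq x
    have h2 := Real.sin_sq_add_cos_sq y
    nlinarith [h1, h2]
  -- sin(y+x) = sin(2x)cos(y-x) + cos(2x)sin(y-x)
  have hsum : Real.sin (y + x) =
      Real.sin (2 * x) * Real.cos (y - x) + Real.cos (2 * x) * Real.sin (y - x) := by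
    have : y + x = 2 * x + (y - x) := by ring
    rw [this, Real.sin_add]
  -- bound on |sin(y-x)|
  have hd : |Real.sin (y - x)| ≤ Real.pi * ε := by
    calc |Real.sin (y - x)| ≤ |y - x| := Real.abs_sin_le_abs
      _ = Real.pi * |θ' - θ| := by
          rw [hx, hy, ← mul_sub, abs_mul, abs_of_pos hπ]
      _ ≤ Real.pi * ε := by nlinarith [abs_nonneg (θ' - θ)]
  -- sqrt(a(1-a)) = |sin(2x)|/2
  have hsq : Real.sqrt (a * (1 - a)) = |Real.sin (2 * x)| / 2 := by
    have : a * (1 - a) = (Real.sin (2 * x) / 2) ^ 2 := by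
      rw [ha, Real.sin_two_mul]
      nlinarith [Real.sin_sq_add_cos_sq x]
    rw [this, Real.sqrt_sq_eq_abs, abs_div, abs_two]
  have hcos : |Real.cos (y - x)| ≤ 1 := Real.abs_cos_le_one _
  have hsin2 : |Real.sin (2 * x)| ≤ 1 := Real.abs_sin_le_one _
  have hdnn := abs_nonneg (Real.sin (y - x))
  have hs2nn := abs_nonneg (Real.sin (2 * x))
  calc |a' - a| = |Real.sin (y + x) * Real.sin (y - x)| := by rw [hid]
    _ = |Real.sin (y + x)| * |Real.sin (y - x)| := abs_mul _ _
    _ ≤ (|Real.sin (2 * x)| * |Real.cos (y - x)| + |Real.cos (2 * x)| * |Real.sin (y - x)|)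
          * |Real.sin (y - x)| := by
        apply mul_le_mul_of_nonneg_right _ hdnn
        rw [hsum]
        calc |Real.sin (2 * x) * Real.cos (y - x) + Real.cos (2 * x) * Real.sin (y - x)|
            ≤ |Real.sin (2 * x) * Real.cos (y - x)| + |Real.cos (2 * x) * Real.sin (y - x)| :=
              abs_add_le _ _
          _ = |Real.sin (2 * x)| * |Real.cos (y - x)| + |Real.cos (2 * x)| * |Real.sin (y - x)| := by
              rw [abs_mul, abs_mul]
    _ ≤ 2 * Real.pi * ε * Real.sqrt (a * (1 - a)) + Real.pi ^ 2 * ε ^ 2 := by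
        rw [hsq]
        have hc2 : |Real.cos (2 * x)| ≤ 1 := Real.abs_cos_le_one _
        have hcnn := abs_nonneg (Real.cos (y - x))
        have hknn := abs_nonneg (Real.cos (2 * x))
        have h1 : |Real.sin (2 * x)| * |Real.cos (y - x)| * |Real.sin (y - x)| ≤
            |Real.sin (2 * x)| * (Real.pi * ε) := by
          nlinarith [mul_le_mul_of_nonneg_left hd hs2nn,
            mul_nonneg (mul_nonneg hs2nn hdnn) (sub_nonneg.mpr hcos)]
        have h2 : |Real.cos (2 * x)| * |Real.sin (y - x)| * |Real.sin (y - x)| ≤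
            (Real.pi * ε) * (Real.pi * ε) := by
          nlinarith [mul_le_mul hd hd hdnn (mul_nonneg hπ.le hε)]
        nlinarith
end

section
/- Let (Ω, 𝔽, ℙ) be a probability space and let X₁, …, X_S be independent, identically distributed random variables valued in ℝ, let μ ∈ ℝ, ε > 0, and p > 1/2 be such that ℙ(|X_k − μ| ≤ ε) ≥ p for each k. Then the probability that strictly more than S/2 of the samples X₁, …, X_S lie within ε of μ is at least 1 − exp(−2S(p − 1/2)²). In particular, the median of the S samples lies within ε of μ with probability at least 1 − exp(−2S(p − 1/2)²), so the failure probability of a quantum estimation procedure with single-run success probability p > 1/2 decreases exponentially in the number of repetitions. -/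
open MeasureTheory ProbabilityTheory
open scoped Classical

private lemma median_per_factor (p : ℝ) (hp : 1 / 2 < p) (hp1 : p < 1) :
    Real.exp (-(Real.log ((1 - p) / p)) / 2) * (2 - 2 * p) ≤
      Real.exp (-2 * (p - 1 / 2) ^ 2) := by
  have hp0 : 0 < p := by linarith
  have h1p : 0 < 1 - p := by linarith
  have hq : 0 < (1 - p) / p := div_pos h1p hp0
  set t := Real.log ((1 - p) / p) with ht
  have het : Real.exp t = (1 - p) / p := Real.exp_log hq
  have hL : 0 ≤ Real.exp (-t / 2) * (2 - 2 * p) :=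
    mul_nonneg (Real.exp_nonneg _) (by linarith)
  have hsq : (Real.exp (-t / 2) * (2 - 2 * p)) ^ 2 = 4 * p * (1 - p) := by
    have h2 : (Real.exp (-t / 2)) ^ 2 = Real.exp (-t) := by
      rw [← Real.exp_nat_mul]; congr 1; push_cast; ring
    have hexpneg : Real.exp (-t) = p / (1 - p) := by
      rw [Real.exp_neg, het]
      field_simp
    rw [mul_pow, h2, hexpneg]
    field_simp
    ring
  have hRsq : (Real.exp (-2 * (p - 1 / 2) ^ 2)) ^ 2 = Real.exp (-4 * (p - 1 / 2) ^ 2) := by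
    rw [← Real.exp_nat_mul]; ring_nf
  have key : 4 * p * (1 - p) ≤ Real.exp (-4 * (p - 1 / 2) ^ 2) := by
    have := Real.add_one_le_exp (-4 * (p - 1 / 2) ^ 2)
    nlinarith
  refine le_of_pow_le_pow_left₀ two_ne_zero (Real.exp_nonneg _) ?_
  rw [hsq, hRsq]
  exact key

/-- Median lemma: if i.i.d. samples `X₁,…,X_S` each lie within `ε` of `μ` with probability
at least `p > 1/2`, then with probability at least `1 - exp(-2S(p-1/2)²)` strictly more
than `S/2` of the samples lie within `ε` of `μ` (so in particular their median does). -/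
theorem median_lemma {Ω : Type*} [MeasurableSpace Ω] (P : Measure Ω)
    [IsProbabilityMeasure P] (S : ℕ) (hS : 1 ≤ S)
    (X : Fin S → Ω → ℝ) (hmeas : ∀ k, Measurable (X k))
    (hindep : iIndepFun X P)
    (hident : ∀ k l, IdentDistrib (X k) (X l) P P)
    (μ : ℝ) (ε : ℝ) (hε : 0 < ε) (p : ℝ) (hp : 1 / 2 < p)
    (hprob : ∀ k, ENNReal.ofReal p ≤ P {ω | |X k ω - μ| ≤ ε}) :
    ENNReal.ofReal (1 - Real.exp (-2 * S * (p - 1 / 2) ^ 2)) ≤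
      P {ω | (S : ℝ) / 2 <
        ((Finset.univ.filter fun k => |X k ω - μ| ≤ ε).card : ℝ)} := by
  have hp0 : 0 < p := by linarith
  set A : Fin S → Set Ω := fun k => {ω | |X k ω - μ| ≤ ε} with hA_def
  have hgset : MeasurableSet {x : ℝ | |x - μ| ≤ ε} :=
    measurableSet_le ((measurable_id.sub measurable_const).abs) measurable_const
  have hA : ∀ k, MeasurableSet (A k) := fun k => (hmeas k) hgset
  -- p ≤ 1
  have hp1 : p ≤ 1 := by
    have h := (hprob ⟨0, hS⟩).trans (prob_le_one (μ := P))
    exact ENNReal.ofReal_le_one.mp h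
  -- the target set
  set B : Set Ω :=
    {ω | (S : ℝ) / 2 < ((Finset.univ.filter fun k => |X k ω - μ| ≤ ε).card : ℝ)} with hB_def
  rcases eq_or_lt_of_le hp1 with hpe | hplt
  · -- case p = 1 : all events have probability 1
    have hAk1 : ∀ k, P (A k) = 1 := fun k =>
      le_antisymm (prob_le_one) (by simpa [hpe] using hprob k)
    have hU : P (⋃ k, (A k)ᶜ) = 0 := by
      refine measure_iUnion_null fun k => ?_
      rw [measure_compl (hA k) (measure_ne_top _ _), hAk1 k, measure_univ, tsub_self]
    have hsub : (⋃ k, (A k)ᶜ)ᶜ ⊆ B := by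
      intro ω hω
      simp only [Set.compl_iUnion, Set.mem_iInter, Set.mem_compl_iff, Set.not_notMem] at hω
      have : (Finset.univ.filter fun k => |X k ω - μ| ≤ ε) = Finset.univ := by
        refine Finset.eq_univ_iff_forall.mpr fun k => Finset.mem_filter.mpr ⟨Finset.mem_univ _, hω k⟩
      simp only [hB_def, Set.mem_setOf_eq]
      rw [this, Finset.card_univ, Fintype.card_fin]
      have hS0 : (0 : ℝ) < S := by exact_mod_cast hS
      linarith
    have hBP : (1 : ENNReal) ≤ P B := by
      calc (1 : ENNReal) = 1 - P (⋃ k, (A k)ᶜ) := by rw [hU, tsub_zero]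
        _ = P (⋃ k, (A k)ᶜ)ᶜ := by
            rw [measure_compl (MeasurableSet.iUnion fun k => (hA k).compl) (measure_ne_top _ _),
              measure_univ]
        _ ≤ P B := measure_mono hsub
    refine le_trans ?_ hBP
    refine ENNReal.ofReal_le_one.mpr ?_
    have := Real.exp_nonneg (-2 * S * (p - 1 / 2) ^ 2)
    linarith
  · -- main case 1/2 < p < 1
    have h1p : 0 < 1 - p := by linarith
    set t := Real.log ((1 - p) / p) with ht_def
    have hq : 0 < (1 - p) / p := div_pos h1p hp0
    have het : Real.exp t = (1 - p) / p := Real.exp_log hq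
    have ht0 : t ≤ 0 := Real.log_nonpos (le_of_lt hq) ((div_le_one hp0).mpr (by linarith))
    -- indicator random variables
    set g : ℝ → ℝ := fun x => if |x - μ| ≤ ε then 1 else 0 with hg_def
    have hg : Measurable g := Measurable.ite hgset measurable_const measurable_const
    set Y : Fin S → Ω → ℝ := fun k => g ∘ X k with hY_def
    have hYmeas : ∀ k, Measurable (Y k) := fun k => hg.comp (hmeas k)
    have hYindep : iIndepFun Y P :=
      hindep.comp (fun _ => g) (fun _ => hg)
    -- rewrite exp (t * Y k) as sum of indicators
    have hrw : ∀ k, (fun ω => Real.exp (t * Y k ω)) =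
        fun ω => (A k).indicator (fun _ => Real.exp t) ω + (A k)ᶜ.indicator (fun _ => (1 : ℝ)) ω := by
      intro k
      funext ω
      by_cases h : ω ∈ A k
      · simp [hY_def, hg_def, h, Set.indicator_of_mem, Set.indicator_of_notMem,
          show |X k ω - μ| ≤ ε from h]
      · have h' : ¬ |X k ω - μ| ≤ ε := h
        simp [hY_def, hg_def, h, h', Set.indicator_of_notMem, Set.indicator_of_mem]
    have hint : ∀ k, Integrable (fun ω => Real.exp (t * Y k ω)) P := by
      intro k
      rw [hrw k]
      exact ((integrable_const _).indicator (hA k)).add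
        ((integrable_const _).indicator (hA k).compl)
    have hcompl : ∀ k, (P (A k)ᶜ).toReal = 1 - (P (A k)).toReal := by
      intro k
      rw [measure_compl (hA k) (measure_ne_top _ _), measure_univ,
        ENNReal.toReal_sub_of_le prob_le_one ENNReal.one_ne_top, ENNReal.toReal_one]
    have hmgf : ∀ k, mgf (Y k) P t
        = Real.exp t * (P (A k)).toReal + (1 - (P (A k)).toReal) := by
      intro k
      rw [mgf, hrw k, integral_add ((integrable_const _).indicator (hA k))
        ((integrable_const _).indicator (hA k).compl),
        integral_indicator_const _ (hA k), integral_indicator_const _ (hA k).compl,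
        measureReal_def, measureReal_def, hcompl k]
      simp [mul_comm]
    -- each factor is bounded
    have hqk : ∀ k, p ≤ (P (A k)).toReal := by
      intro k
      have := hprob k
      rw [← ENNReal.ofReal_toReal (measure_ne_top P (A k))] at this
      exact (ENNReal.ofReal_le_ofReal_iff ENNReal.toReal_nonneg).mp this
    have hfac : ∀ k, mgf (Y k) P t ≤ 2 - 2 * p := by
      intro k
      rw [hmgf k]
      have h1 : Real.exp t - 1 ≤ 0 := by
        rw [het]
        have : (1 - p) / p ≤ 1 := (div_le_one hp0).mpr (by linarith)
        linarith
      have h2 : (Real.exp t - 1) * (P (A k)).toReal ≤ (Real.exp t - 1) * p :=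
        mul_le_mul_of_nonpos_left (hqk k) h1
      have h3 : Real.exp t * p = 1 - 2 * p + p := by
        rw [het]; field_simp; ring
      nlinarith
    have hfac0 : ∀ k, 0 ≤ mgf (Y k) P t := fun k => mgf_nonneg
    -- Chernoff bound
    set Z : Ω → ℝ := ∑ i, Y i with hZ_def
    have hZint : Integrable (fun ω => Real.exp (t * Z ω)) P :=
      hYindep.integrable_exp_mul_sum hYmeas (fun i _ => hint i)
    have hchern : (P {ω | Z ω ≤ (S : ℝ) / 2}).toReal
        ≤ Real.exp (-t * ((S : ℝ) / 2)) * mgf Z P t :=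
      measure_le_le_exp_mul_mgf ((S : ℝ) / 2) ht0 hZint
    have hmgfZ : mgf Z P t = ∏ i, mgf (Y i) P t :=
      hYindep.mgf_sum hYmeas Finset.univ
    have hprod : ∏ i : Fin S, mgf (Y i) P t ≤ (2 - 2 * p) ^ S := by
      calc ∏ i : Fin S, mgf (Y i) P t ≤ ∏ i : Fin S, (2 - 2 * p)
            := Finset.prod_le_prod (fun i _ => hfac0 i) (fun i _ => hfac i)
        _ = (2 - 2 * p) ^ S := by rw [Finset.prod_const, Finset.card_univ, Fintype.card_fin]
    have hbound : (P {ω | Z ω ≤ (S : ℝ) / 2}).toReal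
        ≤ Real.exp (-2 * S * (p - 1 / 2) ^ 2) := by
      have step1 : Real.exp (-t * ((S : ℝ) / 2)) * mgf Z P t
          ≤ Real.exp (-t * ((S : ℝ) / 2)) * (2 - 2 * p) ^ S := by
        refine mul_le_mul_of_nonneg_left ?_ (Real.exp_nonneg _)
        rw [hmgfZ]; exact hprod
      have step2 : Real.exp (-t * ((S : ℝ) / 2)) * (2 - 2 * p) ^ S
          = (Real.exp (-t / 2) * (2 - 2 * p)) ^ S := by
        rw [mul_pow, ← Real.exp_nat_mul]
        congr 1
        ring
      have step3 : (Real.exp (-t / 2) * (2 - 2 * p)) ^ S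
          ≤ (Real.exp (-2 * (p - 1 / 2) ^ 2)) ^ S := by
        refine pow_le_pow_left₀ (mul_nonneg (Real.exp_nonneg _) (by linarith)) ?_ S
        exact median_per_factor p hp hplt
      have step4 : (Real.exp (-2 * (p - 1 / 2) ^ 2)) ^ S
          = Real.exp (-2 * S * (p - 1 / 2) ^ 2) := by
        rw [← Real.exp_nat_mul]
        congr 1
        ring
      calc (P {ω | Z ω ≤ (S : ℝ) / 2}).toReal
          ≤ Real.exp (-t * ((S : ℝ) / 2)) * mgf Z P t := hchern
        _ ≤ Real.exp (-t * ((S : ℝ) / 2)) * (2 - 2 * p) ^ S := step1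
        _ = (Real.exp (-t / 2) * (2 - 2 * p)) ^ S := step2
        _ ≤ (Real.exp (-2 * (p - 1 / 2) ^ 2)) ^ S := step3
        _ = Real.exp (-2 * S * (p - 1 / 2) ^ 2) := step4
    -- identify B with the complement of the Chernoff set
    have hcount : ∀ ω, ((Finset.univ.filter fun k => |X k ω - μ| ≤ ε).card : ℝ) = Z ω := by
      intro ω
      rw [hZ_def]
      simp only [Finset.sum_apply]
      rw [Finset.card_filter]
      push_cast
      refine Finset.sum_congr rfl fun k _ => ?_
      by_cases h : |X k ω - μ| ≤ ε <;> simp [hY_def, hg_def, h]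
    have hBcompl : B = {ω | Z ω ≤ (S : ℝ) / 2}ᶜ := by
      ext ω
      simp only [hB_def, Set.mem_setOf_eq, Set.mem_compl_iff, not_le, hcount ω]
    have hCmeas : MeasurableSet {ω | Z ω ≤ (S : ℝ) / 2} := by
      have hZmeas : Measurable Z := by
        rw [hZ_def]
        have he : (∑ i : Fin S, Y i) = fun ω => ∑ i : Fin S, Y i ω := by
          funext ω; simp [Finset.sum_apply]
        rw [he]
        exact Finset.measurable_sum _ fun i _ => hYmeas i
      exact measurableSet_le hZmeas measurable_const
    set E := Real.exp (-2 * S * (p - 1 / 2) ^ 2) with hE_def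
    have hPC : P {ω | Z ω ≤ (S : ℝ) / 2} ≤ ENNReal.ofReal E := by
      rw [← ENNReal.ofReal_toReal (measure_ne_top P _)]
      exact ENNReal.ofReal_le_ofReal hbound
    rw [hBcompl, measure_compl hCmeas (measure_ne_top _ _), measure_univ]
    calc ENNReal.ofReal (1 - E) = 1 - ENNReal.ofReal E := by
          rw [ENNReal.ofReal_sub _ (by rw [hE_def]; exact Real.exp_nonneg _),
            ENNReal.ofReal_one]
      _ ≤ 1 - P {ω | Z ω ≤ (S : ℝ) / 2} := tsub_le_tsub_left hPC 1
end

section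
/- Let α be a finite nonempty type, let P be a probability mass function on α, and let x̄ ∈ α be a strict (unique) mode of P, i.e. P(x̄) > P(x) for every x ≠ x̄. Let k be the cardinality of the support of P. Then there exists a constant R ∈ (0,1) such that for every S ≥ 1, if X₁, …, X_S are independent samples from P, the probability that the empirical count of x̄ strictly exceeds the empirical count of every other value x ≠ x̄ (so that the empirical mode M_S equals x̄) is at least 1 − 2k·R^S. -/
open MeasureTheory
open scoped Classical ENNReal

/-- Mode extraction from basis encoding with the highest probability: if `x̄` is the
strict mode of a probability mass function `P` with support of cardinality `k`, then
there is `R ∈ (0,1)` such that, for `S` independent samples from `P`, the empirical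
mode equals `x̄` (its empirical count strictly exceeds that of every other value) with
probability at least `1 - 2k R^S`. -/
theorem empirical_mode_success {α : Type*} [Fintype α] [Nonempty α]
    [MeasurableSpace α] [MeasurableSingletonClass α]
    (P : PMF α) (xbar : α) (hmode : ∀ x, x ≠ xbar → P x < P xbar)
    (k : ℕ) (hk : k = (Finset.univ.filter fun x => P x ≠ 0).card) :
    ∃ R : ℝ, 0 < R ∧ R < 1 ∧ ∀ S : ℕ, 1 ≤ S →
      ENNReal.ofReal (1 - 2 * k * R ^ S) ≤
        (Measure.pi fun _ : Fin S => P.toMeasure)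
          {ω | ∀ x, x ≠ xbar →
            (Finset.univ.filter fun i => ω i = x).card <
              (Finset.univ.filter fun i => ω i = xbar).card} := by
  classical
  -- real-valued probabilities
  set pr : α → ℝ := fun a => (P a).toReal with hpr
  have hpr_nonneg : ∀ a, 0 ≤ pr a := fun a => ENNReal.toReal_nonneg
  have hP_ne_top : ∀ a, P a ≠ ⊤ := fun a => P.apply_ne_top a
  have hofReal : ∀ a, ENNReal.ofReal (pr a) = P a := fun a =>
    ENNReal.ofReal_toReal (hP_ne_top a)
  have hsum1 : ∑ a : α, pr a = 1 := by
    have h := P.tsum_coe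
    rw [tsum_fintype] at h
    have : (∑ a : α, P a).toReal = (1 : ℝ≥0∞).toReal := by rw [h]
    rw [ENNReal.toReal_sum (fun a _ => hP_ne_top a)] at this
    simpa using this
  set qr : ℝ := pr xbar with hqr
  -- xbar is in the support
  have hq_ne : P xbar ≠ 0 := by
    obtain ⟨a, ha⟩ := P.support_nonempty
    rw [PMF.mem_support_iff] at ha
    by_cases hax : a = xbar
    · rwa [hax] at ha
    · intro h0
      have h := hmode a hax
      rw [h0] at h
      exact absurd h (by simp)
  have hqr_pos : 0 < qr := ENNReal.toReal_pos hq_ne (hP_ne_top xbar)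
  have hqr_le_one : qr ≤ 1 := by
    have := P.coe_le_one xbar
    have h1 : (P xbar).toReal ≤ (1 : ℝ≥0∞).toReal :=
      ENNReal.toReal_mono (by simp) this
    simpa using h1
  -- strict mode in reals
  have hlt : ∀ x, x ≠ xbar → pr x < qr := by
    intro x hx
    exact ENNReal.toReal_strict_mono (hP_ne_top xbar) (hmode x hx)
  -- the tilt parameter and the per-value rate
  set θ : α → ℝ := fun x => 2 * qr / (pr x + qr) with hθ
  have hθ_pos : ∀ x, 0 < θ x := fun x =>
    div_pos (by linarith [hqr_pos]) (by linarith [hpr_nonneg x, hqr_pos])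
  have hθ_gt_one : ∀ x, x ≠ xbar → 1 < θ x := by
    intro x hx
    have h1 := hlt x hx
    rw [hθ]
    rw [lt_div_iff₀ (by linarith [hpr_nonneg x])]
    linarith
  set r : α → ℝ := fun x => (1 - qr - pr x) + pr x * θ x + qr * (θ x)⁻¹ with hr
  have hr_lt_one : ∀ x, x ≠ xbar → r x < 1 := by
    intro x hx
    have h1 := hlt x hx
    have h0 := hpr_nonneg x
    have hd : 0 < pr x + qr := by linarith
    have hθx : θ x = 2 * qr / (pr x + qr) := rfl
    rw [hr]
    simp only
    rw [hθx]
    rw [div_eq_mul_inv, mul_inv, inv_inv]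
    have h2 : (2 : ℝ) * qr > 0 := by linarith
    field_simp
    have h3 : 0 < (qr - pr x) ^ 2 := by nlinarith
    nlinarith [mul_pos hqr_pos h3]
  -- support minus the mode
  set T : Finset α := (Finset.univ.filter fun a => P a ≠ 0).erase xbar with hT
  have hxbar_mem : xbar ∈ (Finset.univ.filter fun a => P a ≠ 0) := by
    simp [hq_ne]
  have hcardT : T.card + 1 = k := by
    rw [hT, Finset.card_erase_of_mem hxbar_mem, hk]
    have : 1 ≤ (Finset.univ.filter fun a => P a ≠ 0).card :=
      Finset.card_pos.mpr ⟨xbar, hxbar_mem⟩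
    omega
  -- the global rate R
  set R : ℝ := max (1 - qr) (T.fold max (1/2) r) with hR
  have hfold_le : ∀ c : ℝ, (c ≤ 1/2 ∨ ∃ x ∈ T, c ≤ r x) → c ≤ T.fold max (1/2) r := by
    intro c hc
    rw [Finset.le_fold_max]
    exact hc
  have hhalf_le_R : (1/2 : ℝ) ≤ R :=
    le_trans (hfold_le _ (Or.inl le_rfl)) (le_max_right _ _)
  have hR_pos : 0 < R := lt_of_lt_of_le (by norm_num) hhalf_le_R
  have hR_lt_one : R < 1 := by
    apply max_lt (by linarith)
    rw [Finset.fold_max_lt]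
    constructor
    · norm_num
    · intro x hx
      have hxne : x ≠ xbar := Finset.ne_of_mem_erase hx
      exact hr_lt_one x hxne
  have hr_le_R : ∀ x ∈ T, r x ≤ R := fun x hx =>
    le_trans (hfold_le _ (Or.inr ⟨x, hx, le_rfl⟩)) (le_max_right _ _)
  have h1q_le_R : 1 - qr ≤ R := le_max_left _ _
  refine ⟨R, hR_pos, hR_lt_one, ?_⟩
  intro S _hS
  set μ := Measure.pi fun _ : Fin S => P.toMeasure with hμ
  -- counts
  set cnt : (Fin S → α) → α → ℕ :=
    fun ω x => (Finset.univ.filter fun i => ω i = x).card with hcnt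
  -- measure of a singleton
  have hsing : ∀ ω : Fin S → α, μ {ω} = ∏ i, P (ω i) := by
    intro ω
    have h1 : ({ω} : Set (Fin S → α)) = Set.pi Set.univ fun i => {ω i} := by
      ext v
      simp [Set.eq_singleton_iff_unique_mem, funext_iff, Set.mem_pi]
    rw [h1, hμ, Measure.pi_pi]
    exact Finset.prod_congr rfl fun i _ =>
      P.toMeasure_apply_singleton (ω i) (measurableSet_singleton _)
  -- any set's measure is at most the sum of its singleton product weights
  have hmeas_le : ∀ (A : Set (Fin S → α)) (s : Finset (Fin S → α)), A ⊆ ↑s →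
      μ A ≤ ∑ ω ∈ s, ∏ i, P (ω i) := by
    intro A s hAs
    have hA : A ⊆ ⋃ ω ∈ s, ({ω} : Set (Fin S → α)) := by
      intro v hv
      simp only [Set.mem_iUnion, Set.mem_singleton_iff]
      exact ⟨v, hAs hv, rfl⟩
    refine le_trans (measure_mono hA) ?_
    refine (measure_biUnion_finset_le _ _).trans (le_of_eq ?_)
    exact Finset.sum_congr rfl fun ω _ => hsing ω
  -- sum over erase xbar
  have hsum_erase : (∑ a ∈ Finset.univ.erase xbar, P a) = ENNReal.ofReal (1 - qr) := by
    have h1 : (∑ a ∈ Finset.univ.erase xbar, pr a) = 1 - qr := by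
      have := Finset.sum_erase_add Finset.univ pr (Finset.mem_univ xbar)
      rw [hsum1] at this
      linarith
    rw [← h1, ENNReal.ofReal_sum_of_nonneg (fun a _ => hpr_nonneg a)]
    exact Finset.sum_congr rfl fun a _ => (hofReal a).symm
  -- bound for the "no xbar among support-compatible outcomes" events
  have hU : ∀ A : Set (Fin S → α),
      (∀ ω ∈ A, (∀ i, P (ω i) ≠ 0) → ∀ i, ω i ≠ xbar) →
      μ A ≤ ENNReal.ofReal (1 - qr) ^ S := by
    intro A hA
    refine (hmeas_le A (Finset.univ.filter
      fun v : Fin S → α => (∀ i, P (v i) ≠ 0) → ∀ i, v i ≠ xbar) ?_).trans ?_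
    · intro ω hω
      simp only [Finset.coe_filter, Set.mem_setOf_eq, Finset.mem_univ, true_and]
      exact hA ω hω
    · have hsub : ∑ ω ∈ (Finset.univ.filter
          fun v : Fin S → α => (∀ i, P (v i) ≠ 0) → ∀ i, v i ≠ xbar), ∏ i, P (ω i) ≤
          ∑ ω ∈ Fintype.piFinset (fun _ : Fin S => Finset.univ.erase xbar),
            ∏ i, P (ω i) := by
        apply Finset.sum_le_sum_of_ne_zero
        intro ω hω hne
        rw [Finset.mem_filter] at hω
        have hnz : ∀ i, P (ω i) ≠ 0 := by
          intro i h0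
          exact hne (Finset.prod_eq_zero (Finset.mem_univ i) h0)
        have := hω.2 hnz
        rw [Fintype.mem_piFinset]
        intro i
        exact Finset.mem_erase.mpr ⟨this i, Finset.mem_univ _⟩
      refine hsub.trans ?_
      rw [← Finset.sum_pow', hsum_erase]
  -- the main Chernoff-type bound for a fixed x in the support
  have hAx : ∀ x, x ≠ xbar →
      μ {ω | cnt ω xbar ≤ cnt ω x} ≤ ENNReal.ofReal (r x) ^ S := by
    intro x hx
    set gr : α → ℝ := fun a => if a = x then θ x else if a = xbar then (θ x)⁻¹ else 1
      with hgr
    have hgr_nonneg : ∀ a, 0 ≤ gr a := by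
      intro a
      show (0:ℝ) ≤ if a = x then θ x else if a = xbar then (θ x)⁻¹ else 1
      split_ifs
      · exact le_of_lt (hθ_pos x)
      · exact le_of_lt (inv_pos.mpr (hθ_pos x))
      · norm_num
    set g : α → ℝ≥0∞ := fun a => ENNReal.ofReal (gr a) with hg
    have hθ' : g x = ENNReal.ofReal (θ x) := by simp [hg, hgr]
    have hθ'inv : g xbar = (ENNReal.ofReal (θ x))⁻¹ := by
      simp [hg, hgr, hx.symm, if_neg (Ne.symm hx)]
      rw [ENNReal.ofReal_inv_of_pos (hθ_pos x)]
    set θ' : ℝ≥0∞ := ENNReal.ofReal (θ x) with hθ'd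
    have hθ'_ne_zero : θ' ≠ 0 := by
      simp [hθ'd, ENNReal.ofReal_eq_zero, not_le, hθ_pos x]
    have hθ'_ne_top : θ' ≠ ⊤ := ENNReal.ofReal_ne_top
    have hθ'_ge_one : 1 ≤ θ' := by
      rw [hθ'd, ← ENNReal.ofReal_one]
      exact ENNReal.ofReal_le_ofReal (le_of_lt (hθ_gt_one x hx))
    -- product of g over a failure outcome is at least 1
    have hprod_g : ∀ ω : Fin S → α, cnt ω xbar ≤ cnt ω x → 1 ≤ ∏ i, g (ω i) := by
      intro ω hcc
      have hsplit : ∏ i, g (ω i) = θ' ^ (cnt ω x) * (θ'⁻¹) ^ (cnt ω xbar) := by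
        rw [← Finset.prod_filter_mul_prod_filter_not Finset.univ (fun i => ω i = x)]
        congr 1
        · rw [Finset.prod_congr rfl (fun i hi => ?_), Finset.prod_const, hcnt]
          rw [Finset.mem_filter] at hi
          simp [hg, hgr, hi.2, hθ'd]
        · rw [← Finset.prod_filter_mul_prod_filter_not
            (Finset.univ.filter fun i => ¬ω i = x) (fun i => ω i = xbar)]
          have h2 : ∀ i ∈ (Finset.univ.filter fun i => ¬ω i = x).filter
              (fun i => ω i = xbar), g (ω i) = θ'⁻¹ := by
            intro i hi
            simp only [Finset.mem_filter] at hi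
            rw [hi.2, hθ'inv]
          have h3 : ∀ i ∈ (Finset.univ.filter fun i => ¬ω i = x).filter
              (fun i => ¬ω i = xbar), g (ω i) = 1 := by
            intro i hi
            simp only [Finset.mem_filter] at hi
            simp [hg, hgr, hi.1.2, hi.2]
          rw [Finset.prod_congr rfl h2, Finset.prod_congr rfl h3,
            Finset.prod_const, Finset.prod_const, one_pow, mul_one]
          congr 1
          rw [Finset.filter_filter, hcnt]
          congr 1
          apply Finset.filter_congr
          intro i _
          simp only [and_iff_right_iff_imp]
          intro h
          rw [h]; exact Ne.symm hx
      rw [hsplit]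
      have h1 : θ' ^ (cnt ω xbar) * (θ'⁻¹) ^ (cnt ω xbar) = 1 := by
        rw [← mul_pow, ENNReal.mul_inv_cancel hθ'_ne_zero hθ'_ne_top, one_pow]
      calc (1 : ℝ≥0∞) = θ' ^ (cnt ω xbar) * (θ'⁻¹) ^ (cnt ω xbar) := h1.symm
        _ ≤ θ' ^ (cnt ω x) * (θ'⁻¹) ^ (cnt ω xbar) :=
          mul_le_mul_left (pow_le_pow_right₀ hθ'_ge_one hcc) _
    -- expectation bound
    have hEg : (∑ a : α, P a * g a) ≤ ENNReal.ofReal (r x) := by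
      have heq : (∑ a : α, P a * g a) = ENNReal.ofReal (∑ a : α, pr a * gr a) := by
        rw [ENNReal.ofReal_sum_of_nonneg
          (fun a _ => mul_nonneg (hpr_nonneg a) (hgr_nonneg a))]
        refine Finset.sum_congr rfl fun a _ => ?_
        rw [ENNReal.ofReal_mul (hpr_nonneg a), hofReal]
      rw [heq]
      apply ENNReal.ofReal_le_ofReal
      -- compute the real sum
      have hxmem : x ∈ Finset.univ.erase xbar := Finset.mem_erase.mpr ⟨hx, Finset.mem_univ _⟩
      have e1 : (∑ a ∈ (Finset.univ.erase xbar).erase x, pr a * gr a)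
          + pr x * gr x = ∑ a ∈ Finset.univ.erase xbar, pr a * gr a :=
        Finset.sum_erase_add _ _ hxmem
      have e2 : (∑ a ∈ Finset.univ.erase xbar, pr a * gr a)
          + pr xbar * gr xbar = ∑ a : α, pr a * gr a :=
        Finset.sum_erase_add _ _ (Finset.mem_univ xbar)
      have e3 : (∑ a ∈ (Finset.univ.erase xbar).erase x, pr a * gr a)
          = ∑ a ∈ (Finset.univ.erase xbar).erase x, pr a := by
        refine Finset.sum_congr rfl fun a ha => ?_
        have h1 : a ≠ x := Finset.ne_of_mem_erase ha
        have h2 : a ≠ xbar := Finset.ne_of_mem_erase (Finset.mem_of_mem_erase ha)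
        simp [hgr, h1, h2]
      have e4 : (∑ a ∈ (Finset.univ.erase xbar).erase x, pr a) + pr x
          = ∑ a ∈ Finset.univ.erase xbar, pr a :=
        Finset.sum_erase_add _ _ hxmem
      have e5 : (∑ a ∈ Finset.univ.erase xbar, pr a) + pr xbar = ∑ a : α, pr a :=
        Finset.sum_erase_add _ _ (Finset.mem_univ xbar)
      have hgx : gr x = θ x := by simp [hgr]
      have hgxbar : gr xbar = (θ x)⁻¹ := by simp [hgr, Ne.symm hx]
      rw [hr]
      simp only
      rw [hsum1] at e5
      rw [hgx] at e1
      rw [hgxbar, ← hqr] at e2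
      linarith [e1, e2, e3, e4, e5]
    -- assemble the Chernoff bound
    refine (hmeas_le _ (Finset.univ.filter fun ω => cnt ω xbar ≤ cnt ω x) ?_).trans ?_
    · intro ω hω
      simp only [Finset.coe_filter, Set.mem_setOf_eq, Finset.mem_univ, true_and]
      exact hω
    refine le_trans (Finset.sum_le_sum
      (g := fun ω => ∏ i, (P (ω i) * g (ω i))) fun ω hω => ?_) ?_
    · rw [Finset.mem_filter] at hω
      have hω2 : cnt ω xbar ≤ cnt ω x := hω.2
      calc ∏ i, P (ω i) = (∏ i, P (ω i)) * 1 := (mul_one _).symm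
        _ ≤ (∏ i, P (ω i)) * ∏ i, g (ω i) := mul_le_mul_right (hprod_g ω hω2) _
        _ = ∏ i, (P (ω i) * g (ω i)) := Finset.prod_mul_distrib.symm
    · refine le_trans (Finset.sum_le_sum_of_subset (Finset.filter_subset _ _)) ?_
      have hiden : ∑ ω ∈ (Finset.univ : Finset (Fin S → α)), ∏ i, (P (ω i) * g (ω i))
          = (∑ a : α, P a * g a) ^ S := by
        rw [Finset.sum_pow', Fintype.piFinset_univ]
      rw [hiden]
      exact pow_le_pow_left' hEg S
  -- the three pieces of the failure event
  set Fail : Set (Fin S → α) := {ω | ∃ x, x ≠ xbar ∧ cnt ω xbar ≤ cnt ω x} with hFail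
  set U : Set (Fin S → α) := {ω | ∃ x, P x = 0 ∧ x ≠ xbar ∧ cnt ω xbar ≤ cnt ω x}
    with hUdef
  have hFail_sub : Fail ⊆ (⋃ x ∈ T, {ω | cnt ω xbar ≤ cnt ω x}) ∪ U := by
    intro ω hω
    obtain ⟨x, hx1, hx2⟩ := hω
    by_cases hP0 : P x = 0
    · exact Or.inr ⟨x, hP0, hx1, hx2⟩
    · refine Or.inl ?_
      rw [Set.mem_iUnion₂]
      exact ⟨x, Finset.mem_erase.mpr ⟨hx1, by simp [hP0]⟩, hx2⟩
  have hU_bound : μ U ≤ ENNReal.ofReal (1 - qr) ^ S := by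
    apply hU
    intro ω hω hnz i hxb
    obtain ⟨x, hP0, _, hcc⟩ := hω
    have hcx : cnt ω x = 0 := by
      rw [hcnt]
      simp only [Finset.card_eq_zero, Finset.filter_eq_empty_iff]
      intro j _
      intro hj
      exact hnz j (hj ▸ hP0)
    have hcxb : cnt ω xbar = 0 := le_antisymm (hcx ▸ hcc) (Nat.zero_le _)
    rw [hcnt] at hcxb
    simp only [Finset.card_eq_zero, Finset.filter_eq_empty_iff] at hcxb
    exact hcxb (Finset.mem_univ i) hxb
  have hFail_bound : μ Fail ≤ (k : ℝ≥0∞) * ENNReal.ofReal R ^ S := by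
    calc μ Fail ≤ μ (⋃ x ∈ T, {ω | cnt ω xbar ≤ cnt ω x}) + μ U :=
        le_trans (measure_mono hFail_sub) (measure_union_le _ _)
      _ ≤ (∑ x ∈ T, μ {ω | cnt ω xbar ≤ cnt ω x}) + μ U := by
          gcongr
          exact measure_biUnion_finset_le _ _
      _ ≤ (∑ x ∈ T, ENNReal.ofReal R ^ S) + ENNReal.ofReal R ^ S := by
          gcongr with x hx
          · refine (hAx x (Finset.ne_of_mem_erase hx)).trans ?_
            exact pow_le_pow_left' (ENNReal.ofReal_le_ofReal (hr_le_R x hx)) S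
          · refine hU_bound.trans ?_
            exact pow_le_pow_left' (ENNReal.ofReal_le_ofReal h1q_le_R) S
      _ = (T.card + 1 : ℝ≥0∞) * ENNReal.ofReal R ^ S := by
          rw [Finset.sum_const, nsmul_eq_mul, add_mul, one_mul]
      _ = (k : ℝ≥0∞) * ENNReal.ofReal R ^ S := by
          rw [← hcardT]; push_cast; ring_nf
  -- final assembly
  have hbound2 : μ Fail ≤ ENNReal.ofReal (2 * k * R ^ S) := by
    rw [ENNReal.ofReal_mul (by positivity), ENNReal.ofReal_mul (by norm_num),
      ENNReal.ofReal_pow (le_of_lt hR_pos)]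
    calc μ Fail ≤ (k : ℝ≥0∞) * ENNReal.ofReal R ^ S := hFail_bound
      _ ≤ (2 : ℝ≥0∞) * (k : ℝ≥0∞) * ENNReal.ofReal R ^ S := by
          rw [mul_assoc]
          exact le_mul_of_one_le_left zero_le (by norm_num)
      _ = ENNReal.ofReal 2 * (k : ℝ≥0∞) * ENNReal.ofReal R ^ S := by
          norm_num
      _ = ENNReal.ofReal 2 * ENNReal.ofReal (k : ℝ) * ENNReal.ofReal R ^ S := by
          rw [ENNReal.ofReal_natCast]
  set Sc : Set (Fin S → α) := {ω | ∀ x, x ≠ xbar → cnt ω x < cnt ω xbar} with hSc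
  have hcover : (Set.univ : Set (Fin S → α)) ⊆ Sc ∪ Fail := by
    intro ω _
    by_cases h : ∀ x, x ≠ xbar → cnt ω x < cnt ω xbar
    · exact Or.inl h
    · push_neg at h
      obtain ⟨x, hx1, hx2⟩ := h
      exact Or.inr ⟨x, hx1, hx2⟩
  have hprob : μ Set.univ = 1 := measure_univ
  have h1le : (1 : ℝ≥0∞) ≤ μ Sc + μ Fail := by
    calc (1 : ℝ≥0∞) = μ Set.univ := hprob.symm
      _ ≤ μ (Sc ∪ Fail) := measure_mono hcover
      _ ≤ μ Sc + μ Fail := measure_union_le _ _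
  calc ENNReal.ofReal (1 - 2 * k * R ^ S)
      = 1 - ENNReal.ofReal (2 * k * R ^ S) := by
        rw [ENNReal.ofReal_sub _ (by positivity), ENNReal.ofReal_one]
    _ ≤ 1 - μ Fail := tsub_le_tsub_left hbound2 1
    _ ≤ μ Sc := by
        rw [tsub_le_iff_right]
        exact h1le
end
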